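/- arXiv:2112.00692 — 2 statements merged into one kernel-verified Lean document; each statement's English description precedes it below -/
import Mathlib

section
/- A de la Vallée-Poussin type lemma for Besov norms (Lemma 1.13): Fix p ∈ [1,∞], r ∈ [1,∞), and s ∈ (0,1). For every measurable f : 𝕋 → ℝ² with ‖f‖_{Ḃ^s_{p,r}} < ∞ there exists an admissible weight μ (depending on f) such that ‖f‖_{Ḃ^{s,μ}_{p,r}} < ∞. -/
open MeasureTheory Real Set Filter Function
open scoped ENNReal NNReal Topology

noncomputable section

namespace Peskin

abbrev E2 : Type := EuclideanSpace ℝ (Fin 2)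

/-- The fundamental-domain measure of the torus `𝕋 = ℝ/(2πℤ)`. -/
def tmeas : Measure ℝ := volume.restrict (Ioc (-π) π)

/-- Difference operator `δ_α f (θ) = f (θ+α) - f θ`. -/
def dd {E : Type*} [AddGroup E] (α : ℝ) (f : ℝ → E) : ℝ → E := fun θ => f (θ + α) - f θ

/-- Divided difference `D_α f = δ_α f / α`. -/
def Dd (α : ℝ) (f : ℝ → E2) : ℝ → E2 := fun θ => α⁻¹ • (f (θ + α) - f θ)

/-- Arc-chord number `|X|_*`. -/
def arcChord (X : ℝ → E2) : ℝ :=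
  sInf {r : ℝ | ∃ θ α : ℝ, α ∈ Icc (-π) π ∧ α ≠ 0 ∧ r = ‖Dd α X θ‖}

/-- `L^p` norm over the torus, valued in `ℝ≥0∞`. -/
def lpT {E : Type*} [NormedAddCommGroup E] (p : ℝ≥0∞) (f : ℝ → E) : ℝ≥0∞ :=
  eLpNorm f p tmeas

/-- Admissible weight (Definition 1.4 of the paper). -/
structure AdmissibleWeight (μ : ℝ → ℝ) : Prop where
  one_le : ∀ r : ℝ, 0 ≤ r → 1 ≤ μ r
  mono : MonotoneOn μ (Ici 0)
  tendsto_top : Tendsto μ atTop atTop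
  doubling : ∃ c₀ : ℝ, 0 < c₀ ∧ ∀ r : ℝ, 0 ≤ r → μ (2 * r) ≤ c₀ * μ r
  log_decay : AntitoneOn (fun r => μ r / Real.log (4 + r)) (Ici 0)

/-- The measure `dβ/|β|` on the fundamental domain. -/
def bmeas : Measure ℝ := tmeas.withDensity fun β => ENNReal.ofReal |β|⁻¹

/-- `L^r(dβ/|β|)`-type norm, with exponent `r ∈ [1,∞]`, of an `ℝ≥0∞`-valued function. -/
def eNorm (r : ℝ≥0∞) (g : ℝ → ℝ≥0∞) : ℝ≥0∞ :=
  if r = ∞ then essSup g bmeas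
  else (∫⁻ β, g β ^ r.toReal ∂bmeas) ^ (1 / r.toReal)

/-- Weighted homogeneous Besov seminorm `Ḃ^{s,μ}_{p,r}` over the torus. -/
def besovW {E : Type*} [NormedAddCommGroup E] (s : ℝ) (p r : ℝ≥0∞) (μ : ℝ → ℝ)
    (f : ℝ → E) : ℝ≥0∞ :=
  eNorm r fun β => ENNReal.ofReal (μ |β|⁻¹) * lpT p (dd β f) / ENNReal.ofReal (|β| ^ s)

/-- Homogeneous Besov seminorm `Ḃ^s_{p,r}` over the torus. -/
def besov {E : Type*} [NormedAddCommGroup E] (s : ℝ) (p r : ℝ≥0∞) (f : ℝ → E) : ℝ≥0∞ :=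
  besovW s p r (fun _ => 1) f

/-- The `k`-th Fourier coefficient of the `i`-th component of `g`. -/
def fcoef (g : ℝ → E2) (k : ℤ) (i : Fin 2) : ℂ :=
  (2 * π : ℝ)⁻¹ •
    ∫ θ in Ioc (-π) π, Complex.exp (-Complex.I * (k : ℂ) * (θ : ℂ)) * Complex.ofReal (g θ i)

/-- Homogeneous Sobolev seminorm `Ḣ^s` over the torus. -/
def hSob (s : ℝ) (g : ℝ → E2) : ℝ≥0∞ :=
  (∑' k : ℤ, ENNReal.ofReal (|(k : ℝ)| ^ (2 * s)) *
      (ENNReal.ofReal ‖fcoef g k 0‖ ^ 2 + ENNReal.ofReal ‖fcoef g k 1‖ ^ 2)) ^ (1 / 2 : ℝ)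

/-- The norm `‖f‖_{C^μ_T}`. -/
def cNorm (μ : ℝ → ℝ) (T : ℝ) (f : ℝ → ℝ → E2) : ℝ≥0∞ :=
  ∫⁻ β in Ioc (-π) π,
    ENNReal.ofReal (μ |β|⁻¹) *
        essSup (fun t => lpT 2 (dd β (f t))) (volume.restrict (Icc 0 T)) /
      ENNReal.ofReal (|β| ^ (3 / 2 : ℝ))

/-- The norm `‖f‖_{D^μ_T}`. -/
def dNorm (μ : ℝ → ℝ) (T : ℝ) (f : ℝ → ℝ → E2) : ℝ≥0∞ :=
  ∫⁻ β in Ioc (-π) π,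
    ENNReal.ofReal (μ |β|⁻¹) *
        (∫⁻ t in Icc 0 T, hSob (1 / 2) (dd β (f t)) ^ 2) ^ (1 / 2 : ℝ) /
      ENNReal.ofReal (|β| ^ (3 / 2 : ℝ))

/-- The norm `‖g‖_{B^μ}`. -/
def bNorm (μ : ℝ → ℝ) (g : ℝ → E2) : ℝ≥0∞ :=
  ∫⁻ β in Ioc (-π) π,
    ENNReal.ofReal (μ |β|⁻¹) * lpT 2 (dd β g) / ENNReal.ofReal (|β| ^ (3 / 2 : ℝ))

/-- A tension map `T(z) = 𝒯(|z|) z / |z|` with `𝒯(0) = 0`. -/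
def IsTensionMap (T : E2 → E2) : Prop :=
  ∃ 𝒯 : ℝ → ℝ, 𝒯 0 = 0 ∧ T 0 = 0 ∧ ∀ z : E2, z ≠ 0 → T z = (𝒯 ‖z‖ / ‖z‖) • z

/-- Quantitative tension assumptions with constants `lam, C₁, C₂`. -/
def QuantTension (T : E2 → E2) (lam C₁ C₂ : ℝ) : Prop :=
  ContDiff ℝ 2 T ∧ (∀ z : E2, ‖fderiv ℝ T z‖ ≤ C₁) ∧
    (∀ z : E2, ‖iteratedFDeriv ℝ 2 T z‖ ≤ C₂) ∧
    ∀ z v : E2, lam * ‖v‖ ^ 2 ≤ @inner ℝ E2 _ v (fderiv ℝ T z v)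

/-- The unit vector `ẑ`. -/
def zhat (z : E2) : E2 := ‖z‖⁻¹ • z

/-- The perpendicular vector `z^⊥`. -/
def zperp (z : E2) : E2 := (EuclideanSpace.equiv (Fin 2) ℝ).symm ![-(z 1), z 0]

/-- The matrix `P(z) = ẑ⊗ẑ - ẑ^⊥⊗ẑ^⊥` applied to `v`. -/
def matP (z v : E2) : E2 :=
  (@inner ℝ E2 _ (zhat z) v) • zhat z - (@inner ℝ E2 _ (zhat (zperp z)) v) • zhat (zperp z)

/-- The matrix `R(z) = ẑ⊗ẑ^⊥ + ẑ^⊥⊗ẑ` applied to `v`. -/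
def matR (z v : E2) : E2 :=
  (@inner ℝ E2 _ (zhat (zperp z)) v) • zhat z + (@inner ℝ E2 _ (zhat z) v) • zhat (zperp z)

/-- The kernel matrix `K[X](θ,α)` applied to the vector `v`. -/
def kerK (X : ℝ → E2) (θ α : ℝ) (v : E2) : E2 :=
  (4 * π : ℝ)⁻¹ •
    (((@inner ℝ E2 _ (deriv X (θ + α)) (matP (Dd α X θ) (deriv X θ))) / ‖Dd α X θ‖ ^ 2) • v -
      ((@inner ℝ E2 _ (deriv X (θ + α)) (matR (Dd α X θ) (deriv X θ))) / ‖Dd α X θ‖ ^ 2) •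
        matR (Dd α X θ) v +
      ((@inner ℝ E2 _ (deriv X (θ + α)) (matP (Dd α X θ) (deriv X θ) - deriv X θ)) /
          ‖Dd α X θ‖ ^ 2) • matP (Dd α X θ) v)

/-- The θ-derivative `X'` of the time dependent family `X`. -/
def pd (X : ℝ → ℝ → E2) : ℝ → ℝ → E2 := fun t θ => deriv (X t) θ

/-- `X` solves the Peskin equation with tension map `Tm` on the time set `I`
(principal value formulation). -/
def SolvesPeskin (Tm : E2 → E2) (X : ℝ → ℝ → E2) (I : Set ℝ) : Prop :=
  ∀ t ∈ I, ∀ θ : ℝ,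
    Tendsto
      (fun ε : ℝ =>
        ∫ α in {a : ℝ | ε ≤ |a| ∧ |a| ≤ π},
          (α ^ 2)⁻¹ • kerK (X t) θ α (Tm (deriv (X t) (θ + α)) - Tm (deriv (X t) θ)))
      (nhdsWithin 0 (Ioi 0)) (nhds (deriv (fun s => deriv (X s) θ) t))

/-- Strong solution of the Peskin problem on `[0,T]` with tension map `Tm`
and initial data `X₀`. -/
structure IsStrongSolution (Tm : E2 → E2) (T : ℝ) (X₀ : ℝ → E2) (X : ℝ → ℝ → E2) : Prop where
  periodic : ∀ t : ℝ, Periodic (X t) (2 * π)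
  smooth : ContDiffOn ℝ 2 (fun q : ℝ × ℝ => X q.1 q.2) (Ioc 0 T ×ˢ (univ : Set ℝ))
  solves : SolvesPeskin Tm X (Ioc 0 T)
  arc_chord : ∃ r : ℝ, 0 < r ∧ ∀ t ∈ Icc 0 T, r ≤ arcChord (X t)
  init : Tendsto (fun t => lpT ∞ (fun θ => deriv (X t) θ - deriv X₀ θ))
      (nhdsWithin 0 (Ioi 0)) (nhds 0)

/-- A bound `C` for the `C^{k,γ}` norm of `f` on the set `s`. -/
def CkHolderOn {E F : Type*} [NormedAddCommGroup E] [NormedSpace ℝ E] [NormedAddCommGroup F]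
    [NormedSpace ℝ F] (k : ℕ) (γ : ℝ) (f : E → F) (s : Set E) (C : ℝ) : Prop :=
  ContDiffOn ℝ k f s ∧
    (∀ i : ℕ, i ≤ k → ∀ x ∈ s, ‖iteratedFDerivWithin ℝ i f s x‖ ≤ C) ∧
    ∀ x ∈ s, ∀ y ∈ s,
      ‖iteratedFDerivWithin ℝ k f s x - iteratedFDerivWithin ℝ k f s y‖ ≤ C * ‖x - y‖ ^ γ

/-- A strong solution enjoying the standard a priori bounds. -/
def GoodSol (Tm : E2 → E2) (μ : ℝ → ℝ) (M ρ Cstar c lam T : ℝ) (X₀ : ℝ → E2)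
    (X : ℝ → ℝ → E2) : Prop :=
  Periodic X₀ (2 * π) ∧ ContDiff ℝ 1 X₀ ∧ bNorm μ (deriv X₀) ≤ ENNReal.ofReal M ∧
    0 < arcChord X₀ ∧ IsStrongSolution Tm T X₀ X ∧ (∀ t ∈ Icc 0 T, ρ ≤ arcChord (X t)) ∧
    cNorm μ T (pd X) + ENNReal.ofReal (c * Real.sqrt lam) * dNorm μ T (pd X) ≤
      ENNReal.ofReal (Cstar * M)

/-- A smooth-on-`(0,T]` solution enjoying the standard a priori bounds. -/
def AprioriSol (Tm : E2 → E2) (μ : ℝ → ℝ) (M ρ Cstar c lam T : ℝ) (X : ℝ → ℝ → E2) : Prop :=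
  (∀ t : ℝ, Periodic (X t) (2 * π)) ∧
    ContDiffOn ℝ 2 (fun q : ℝ × ℝ => X q.1 q.2) (Ioc 0 T ×ˢ (univ : Set ℝ)) ∧
    SolvesPeskin Tm X (Ioc 0 T) ∧ (∀ t ∈ Icc 0 T, ρ ≤ arcChord (X t)) ∧
    cNorm μ T (pd X) + ENNReal.ofReal (c * Real.sqrt lam) * dNorm μ T (pd X) ≤
      ENNReal.ofReal (Cstar * M)

/-! Put `ν = (‖δ_β f‖_p / |β| ^ s) ^ r dβ/|β|`, a finite measure. The weight is
`μ R = ⨅ n, w n * max 1 (log (4 + R) / c n)` with `w n = 2 ^ (n / r)`. Every term is an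
admissible weight, and all defining properties except unboundedness pass to the infimum;
unboundedness holds since `w n → ∞`. As `μ R ≤ w n` whenever `log (4 + R) ≤ c n`, it suffices to
choose thresholds `c n → ∞` so sparse that the `ν`-measure of the layer
`{c (n - 1) < log (4 + |β|⁻¹) ≤ c n}` is `O(4⁻¹ ^ n)`: then
`∫ μ (|β|⁻¹) ^ r dν ≤ ∑ 2 ^ n O(4⁻¹ ^ n) < ∞`. -/

section SlowWeight

variable {w c : ℕ → ℝ}

def slowWeight (w c : ℕ → ℝ) (R : ℝ) : ℝ :=
  ⨅ n, w n * max 1 (Real.log (4 + R) / c n)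

lemma one_le_slowWeight_term (hw : ∀ n, 1 ≤ w n) (n : ℕ) (R : ℝ) :
    1 ≤ w n * max 1 (Real.log (4 + R) / c n) :=
  one_le_mul_of_one_le_of_one_le (hw n) (le_max_left _ _)

lemma bddBelow_slowWeight_terms (hw : ∀ n, 1 ≤ w n) (R : ℝ) :
    BddBelow (range fun n => w n * max 1 (Real.log (4 + R) / c n)) :=
  ⟨1, forall_mem_range.2 fun n => one_le_slowWeight_term hw n R⟩

lemma slowWeight_le_of_log_le (hw : ∀ n, 1 ≤ w n) {n : ℕ} (hc : 0 < c n) {R : ℝ}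
    (hR : Real.log (4 + R) ≤ c n) : slowWeight w c R ≤ w n := by
  refine (ciInf_le (bddBelow_slowWeight_terms hw R) n).trans_eq ?_
  rw [max_eq_left ((div_le_one hc).2 hR), mul_one]

lemma log_four_add_two_mul_le {R : ℝ} (hR : 0 ≤ R) :
    Real.log (4 + 2 * R) ≤ 2 * Real.log (4 + R) := by
  calc Real.log (4 + 2 * R) ≤ Real.log ((4 + R) ^ 2) :=
        Real.log_le_log (by linarith) (by nlinarith)
    _ = 2 * Real.log (4 + R) := by rw [Real.log_pow]; norm_num

lemma max_one_div_mul_inv {L : ℝ} (hL : 0 < L) (c : ℝ) :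
    max 1 (L / c) * L⁻¹ = max L⁻¹ c⁻¹ := by
  rw [max_mul_of_nonneg _ _ (inv_nonneg.2 hL.le), one_mul, div_mul_eq_mul_div,
    mul_inv_cancel₀ hL.ne', one_div]

lemma monotoneOn_slowWeight (hw : ∀ n, 1 ≤ w n) (hc : ∀ n, 0 < c n) :
    MonotoneOn (slowWeight w c) (Ici 0) := by
  intro R hR R' _ hRR'
  have hR : (0 : ℝ) ≤ R := hR
  refine ciInf_mono (bddBelow_slowWeight_terms hw R) fun n => mul_le_mul_of_nonneg_left
    (max_le_max le_rfl (div_le_div_of_nonneg_right ?_ (hc n).le)) (zero_le_one.trans (hw n))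
  exact Real.log_le_log (by linarith) (by linarith)

lemma tendsto_slowWeight_atTop (hw : ∀ n, 1 ≤ w n) (hw_top : Tendsto w atTop atTop)
    (hc : ∀ n, 0 < c n) (hc_mono : Monotone c) : Tendsto (slowWeight w c) atTop atTop := by
  refine tendsto_atTop.2 fun b => ?_
  obtain ⟨N, hN⟩ := eventually_atTop.1 (tendsto_atTop.1 hw_top b)
  have hlog : Tendsto (fun R : ℝ => Real.log (4 + R)) atTop atTop :=
    Real.tendsto_log_atTop.comp (tendsto_atTop_add_const_left _ 4 tendsto_id)
  filter_upwards [eventually_ge_atTop 0, tendsto_atTop.1 hlog (b * c N)] with R hR hbR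
  refine le_ciInf fun n => ?_
  rcases le_or_gt N n with hNn | hnN
  · exact (hN n hNn).trans (le_mul_of_one_le_right (zero_le_one.trans (hw n)) (le_max_left _ _))
  · calc b ≤ Real.log (4 + R) / c N := (le_div_iff₀ (hc N)).2 hbR
      _ ≤ Real.log (4 + R) / c n :=
        div_le_div_of_nonneg_left (Real.log_nonneg (by linarith)) (hc n) (hc_mono hnN.le)
      _ ≤ max 1 (Real.log (4 + R) / c n) := le_max_right _ _
      _ ≤ _ := le_mul_of_one_le_left (zero_le_one.trans (le_max_left _ _)) (hw n)

lemma slowWeight_two_mul_le (hw : ∀ n, 1 ≤ w n) (hc : ∀ n, 0 < c n) {R : ℝ} (hR : 0 ≤ R) :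
    slowWeight w c (2 * R) ≤ 2 * slowWeight w c R := by
  rw [slowWeight, slowWeight, Real.mul_iInf_of_nonneg zero_le_two]
  refine ciInf_mono (bddBelow_slowWeight_terms hw _) fun n => ?_
  have hmax : max 1 (Real.log (4 + 2 * R) / c n) ≤ 2 * max 1 (Real.log (4 + R) / c n) := by
    rw [mul_max_of_nonneg _ _ zero_le_two, ← mul_div_assoc]
    exact max_le_max (by norm_num)
      (div_le_div_of_nonneg_right (log_four_add_two_mul_le hR) (hc n).le)
  calc w n * max 1 (Real.log (4 + 2 * R) / c n)
      ≤ w n * (2 * max 1 (Real.log (4 + R) / c n)) :=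
        mul_le_mul_of_nonneg_left hmax (zero_le_one.trans (hw n))
    _ = 2 * (w n * max 1 (Real.log (4 + R) / c n)) := by ring

lemma antitoneOn_slowWeight_div_log (hw : ∀ n, 1 ≤ w n) :
    AntitoneOn (fun R => slowWeight w c R / Real.log (4 + R)) (Ici 0) := by
  intro R hR R' hR' hRR'
  have hR : (0 : ℝ) ≤ R := hR
  have hL (R : ℝ) (hR : R ∈ Ici (0 : ℝ)) : 0 < Real.log (4 + R) :=
    Real.log_pos (by linarith [mem_Ici.1 hR])
  have hw0 n : 0 ≤ w n := zero_le_one.trans (hw n)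
  change (⨅ n, _) / _ ≤ (⨅ n, _) / _
  rw [div_eq_mul_inv, div_eq_mul_inv, Real.iInf_mul_of_nonneg (inv_nonneg.2 (hL R hR).le),
    Real.iInf_mul_of_nonneg (inv_nonneg.2 (hL R' hR').le)]
  refine ciInf_mono ⟨0, forall_mem_range.2 fun n => ?_⟩ fun n => ?_
  · exact mul_nonneg (mul_nonneg (hw0 n) (zero_le_one.trans (le_max_left _ _)))
      (inv_nonneg.2 (hL R' hR').le)
  · rw [mul_assoc, mul_assoc, max_one_div_mul_inv (hL R' hR'), max_one_div_mul_inv (hL R hR)]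
    gcongr
    exacts [hw0 n, hL R hR]

theorem slowWeight_admissible (hw : ∀ n, 1 ≤ w n) (hw_top : Tendsto w atTop atTop)
    (hc : ∀ n, 0 < c n) (hc_mono : Monotone c) : AdmissibleWeight (slowWeight w c) where
  one_le R _ := le_ciInf fun n => one_le_slowWeight_term hw n R
  mono := monotoneOn_slowWeight hw hc
  tendsto_top := tendsto_slowWeight_atTop hw hw_top hc hc_mono
  doubling := ⟨2, two_pos, fun _ hR => slowWeight_two_mul_le hw hc hR⟩
  log_decay := antitoneOn_slowWeight_div_log hw

end SlowWeight

lemma ofReal_two_rpow_inv_pow_rpow {q : ℝ} (hq : 0 < q) (n : ℕ) :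
    ENNReal.ofReal (((2 : ℝ) ^ q⁻¹) ^ n) ^ q = 2 ^ n := by
  rw [ENNReal.ofReal_rpow_of_nonneg (by positivity) hq.le, ← Real.rpow_natCast,
    ← Real.rpow_mul zero_le_two, ← Real.rpow_mul zero_le_two, mul_right_comm,
    inv_mul_cancel₀ hq.ne', one_mul, Real.rpow_natCast, ENNReal.ofReal_pow zero_le_two,
    ENNReal.ofReal_ofNat]

lemma tsum_two_pow_mul_four_inv_pow (C : ℝ≥0∞) : ∑' n : ℕ, 2 ^ n * (C * 4⁻¹ ^ n) = 2 * C := by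
  have h24 : (2 : ℝ≥0∞) * 4⁻¹ = 2⁻¹ := by
    rw [show (4 : ℝ≥0∞) = 2 * 2 by norm_num, ENNReal.mul_inv (by simp) (by simp), ← mul_assoc,
      ENNReal.mul_inv_cancel two_ne_zero ENNReal.ofNat_ne_top, one_mul]
  simp_rw [mul_left_comm _ C, ← mul_pow, h24]
  rw [ENNReal.tsum_mul_left, ENNReal.tsum_geometric, ENNReal.one_sub_inv_two, inv_inv, mul_comm]

section Layers

variable {α : Type*} [MeasurableSpace α]

lemma tendsto_measure_setOf_natCast_lt (ν : Measure α) [IsFiniteMeasure ν] {g : α → ℝ}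
    (hg : Measurable g) : Tendsto (fun k : ℕ => ν {x | (k : ℝ) < g x}) atTop (𝓝 0) := by
  have hempty : (⋂ k : ℕ, {x | (k : ℝ) < g x}) = ∅ :=
    eq_empty_of_forall_notMem fun x hx =>
      let ⟨k, hk⟩ := exists_nat_ge (g x)
      (mem_iInter.1 hx k).not_ge hk
  have := tendsto_measure_iInter_atTop (μ := ν)
    (fun k => (measurableSet_lt measurable_const hg).nullMeasurableSet)
    (fun k l hkl x hx => (Nat.cast_le.2 hkl).trans_lt (α := ℝ) hx) ⟨0, measure_ne_top _ _⟩
  rwa [hempty, measure_empty] at this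

/-- `G` need not be measurable: the Besov integrand `β ↦ ‖δ_β f‖_p` is not known to be. -/
lemma lintegral_mul_le_tsum_withDensity {ν : Measure α} {A : ℕ → Set α}
    (hA : ∀ n, MeasurableSet (A n)) (hcover : ⋃ n, A n = univ) {Φ G : α → ℝ≥0∞} {K : ℕ → ℝ≥0∞}
    (hK : ∀ n, K n ≠ ∞) (hΦ : ∀ n, ∀ x ∈ A n, Φ x ≤ K n) :
    ∫⁻ x, Φ x * G x ∂ν ≤ ∑' n, K n * ν.withDensity G (A n) := by
  rw [← setLIntegral_univ, ← hcover]
  refine (lintegral_iUnion_le _ _).trans (ENNReal.tsum_le_tsum fun n => ?_)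
  calc ∫⁻ x in A n, Φ x * G x ∂ν ≤ ∫⁻ x in A n, K n * G x ∂ν :=
        setLIntegral_mono' (hA n) fun x hx => mul_le_mul_left (hΦ n x hx) _
    _ = K n * ν.withDensity G (A n) := by
        rw [lintegral_const_mul' _ _ (hK n), withDensity_apply _ (hA n)]

lemma measure_disjointed_setOf_le_le {ν : Measure α} {L : α → ℝ} {c : ℕ → ℝ}
    (hc : Monotone c) (htail : ∀ n, ν {x | c n < L x} ≤ 4⁻¹ ^ (n + 1)) (n : ℕ) :
    ν (disjointed (fun n => {x | L x ≤ c n}) n) ≤ (ν univ + 1) * 4⁻¹ ^ n := by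
  cases n with
  | zero => simpa using (measure_mono (subset_univ _)).trans le_self_add
  | succ n =>
    have hmono : Monotone fun n => {x | L x ≤ c n} :=
      fun m n hmn x (hx : L x ≤ c m) => hx.trans (hc hmn)
    rw [hmono.disjointed_add_one]
    exact (measure_mono fun x hx => not_le.1 (show ¬L x ≤ c n from hx.2)).trans
      ((htail n).trans (le_mul_of_one_le_left' le_add_self))

theorem exists_admissibleWeight_lintegral_rpow_mul_lt_top (ν : Measure α) {h : α → ℝ}
    (hh : Measurable h) {G : α → ℝ≥0∞} (hG : ∫⁻ x, G x ∂ν ≠ ∞) {q : ℝ} (hq : 0 < q) :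
    ∃ μ : ℝ → ℝ, AdmissibleWeight μ ∧ ∫⁻ x, ENNReal.ofReal (μ (h x)) ^ q * G x ∂ν < ∞ := by
  set ν' := ν.withDensity G
  have : IsFiniteMeasure ν' := isFiniteMeasure_withDensity hG
  set L : α → ℝ := fun x => Real.log (4 + h x)
  have hL : Measurable L := Real.measurable_log.comp (measurable_const.add hh)
  obtain ⟨φ, hφ, hφν⟩ := extraction_forall_of_eventually fun n =>
    ((tendsto_order.1 (tendsto_measure_setOf_natCast_lt ν' hL)).2 (4⁻¹ ^ (n + 1))
      (ENNReal.pow_pos (by simp) _)).mono fun _ => le_of_lt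
  set c : ℕ → ℝ := fun n => φ n + 1
  have hc_mono : Monotone c := fun m n hmn => by simpa [c] using hφ.monotone hmn
  set b : ℝ := 2 ^ q⁻¹
  have hb : 1 < b := Real.one_lt_rpow one_lt_two (inv_pos.2 hq)
  have hw n : 1 ≤ b ^ n := one_le_pow₀ hb.le
  refine ⟨slowWeight (b ^ ·) c, slowWeight_admissible hw (tendsto_pow_atTop_atTop_of_one_lt hb)
    (fun n => by positivity) hc_mono, ?_⟩
  set B : ℕ → Set α := fun n => {x | L x ≤ c n}
  have hB_meas n : MeasurableSet (B n) := measurableSet_le hL measurable_const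
  have hcover : ⋃ n, disjointed B n = univ := by
    refine iUnion_disjointed.trans (eq_univ_of_forall fun x => mem_iUnion.2 ?_)
    obtain ⟨n, hn⟩ := exists_nat_ge (L x)
    exact ⟨n, hn.trans ((Nat.cast_le.2 (hφ.id_le n)).trans (le_add_of_nonneg_right zero_le_one))⟩
  have hweight n x (hx : x ∈ disjointed B n) :
      ENNReal.ofReal (slowWeight (b ^ ·) c (h x)) ^ q ≤ 2 ^ n := by
    rw [← ofReal_two_rpow_inv_pow_rpow hq n]
    exact ENNReal.rpow_le_rpow (ENNReal.ofReal_le_ofReal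
      (slowWeight_le_of_log_le hw (by positivity) (disjointed_subset B n hx))) hq.le
  have htail n : ν' {x | c n < L x} ≤ 4⁻¹ ^ (n + 1) :=
    (measure_mono fun x (hx : c n < L x) => (lt_add_one (φ n : ℝ)).trans hx).trans (hφν n)
  calc ∫⁻ x, ENNReal.ofReal (slowWeight (b ^ ·) c (h x)) ^ q * G x ∂ν
      ≤ ∑' n, 2 ^ n * ν' (disjointed B n) :=
        lintegral_mul_le_tsum_withDensity (MeasurableSet.disjointed hB_meas) hcover
          (fun n => ENNReal.pow_ne_top ENNReal.ofNat_ne_top) hweight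
    _ ≤ ∑' n : ℕ, 2 ^ n * ((ν' univ + 1) * 4⁻¹ ^ n) :=
        ENNReal.tsum_le_tsum fun n =>
          mul_le_mul_right (measure_disjointed_setOf_le_le hc_mono htail n) _
    _ = 2 * (ν' univ + 1) := tsum_two_pow_mul_four_inv_pow _
    _ < ∞ := by simp [ENNReal.mul_lt_top, measure_lt_top]

end Layers

lemma besovW_eq_lintegral {E : Type*} [NormedAddCommGroup E] (s : ℝ) (p : ℝ≥0∞) {r : ℝ≥0∞}
    (hr : r ≠ ∞) (μ : ℝ → ℝ) (f : ℝ → E) :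
    besovW s p r μ f = (∫⁻ β, ENNReal.ofReal (μ |β|⁻¹) ^ r.toReal *
      (lpT p (dd β f) / ENNReal.ofReal (|β| ^ s)) ^ r.toReal ∂bmeas) ^ (1 / r.toReal) := by
  simp only [besovW, eNorm, hr, if_false, mul_div_assoc,
    ENNReal.mul_rpow_of_nonneg _ _ ENNReal.toReal_nonneg]

lemma besov_eq_lintegral {E : Type*} [NormedAddCommGroup E] (s : ℝ) (p : ℝ≥0∞) {r : ℝ≥0∞}
    (hr : r ≠ ∞) (f : ℝ → E) :
    besov s p r f =
      (∫⁻ β, (lpT p (dd β f) / ENNReal.ofReal (|β| ^ s)) ^ r.toReal ∂bmeas) ^ (1 / r.toReal) := by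
  simp [besov, besovW_eq_lintegral s p hr]

theorem vallee_poussin_besov_general
    (p r : ℝ≥0∞) (hr : 1 ≤ r) (hr' : r ≠ ∞) (s : ℝ) (f : ℝ → E2) (hf : besov s p r f < ∞) :
    ∃ μ : ℝ → ℝ, AdmissibleWeight μ ∧ besovW s p r μ f < ∞ := by
  have hq : 0 < r.toReal := ENNReal.toReal_pos (one_pos.trans_le hr).ne' hr'
  rw [besov_eq_lintegral s p hr', ENNReal.rpow_lt_top_iff_of_pos (by positivity)] at hf
  obtain ⟨μ, hμ, hfin⟩ := exists_admissibleWeight_lintegral_rpow_mul_lt_top bmeas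
    measurable_abs.inv hf.ne hq
  refine ⟨μ, hμ, ?_⟩
  rw [besovW_eq_lintegral s p hr']
  exact ENNReal.rpow_lt_top_of_nonneg (by positivity) hfin.ne

/-- Lemma 1.13 (a de la Vallée-Poussin type lemma for Besov norms). -/
theorem vallee_poussin_besov
    (p r : ℝ≥0∞) (hp : 1 ≤ p) (hr : 1 ≤ r) (hr' : r ≠ ∞)
    (s : ℝ) (hs : 0 < s) (hs1 : s < 1)
    (f : ℝ → E2) (hper : Periodic f (2 * π)) (hmeas : Measurable f)
    (hf : besov s p r f < ∞) :
    ∃ μ : ℝ → ℝ, AdmissibleWeight μ ∧ besovW s p r μ f < ∞ :=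
  vallee_poussin_besov_general p r hr hr' s f hf

end Peskin
end
end

section
/- Bounds for the averaged difference operators (Lemma 3.2): Let f : 𝕋 → ℝ² be continuously differentiable with derivative f', and for α ∈ [-π,π], α ≠ 0, define δ_α^+ f'(θ) := f'(θ+α) − D_α f(θ) and δ_α^- f'(θ) := f'(θ) − D_α f(θ). Then: (i) for every p ∈ [1,∞] and every α ≠ 0, ‖δ_α^- f'‖_{L^p(𝕋)} ≤ 2 ‖f'‖_{L^p(𝕋)}, ‖δ_α^+ f'‖_{L^p(𝕋)} ≤ 4 ‖f'‖_{L^p(𝕋)}, and ‖D_α f‖_{L^p(𝕋)} ≤ ‖f'‖_{L^p(𝕋)}; (ii) for every 0 < s < 1 and p, q ∈ [1,∞] there exists C = C(s,q) such that ( ∫_{[-π,π]} ‖δ_β^± f'‖_{L^p(𝕋)}^q |β|^{-1-sq} dβ )^{1/q} ≤ C ‖f'‖_{Ḃ^s_{p,q}} (with the essential supremum modification when q = ∞), where the estimate holds for both choices of sign. -/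
open MeasureTheory Real Set Filter Function
open scoped ENNReal NNReal Topology

noncomputable section

namespace Peskin

/-!
`D_α f` is the average of the translates `f'(· + tα)`, `t ∈ [0, 1]`, so part (i) is Jensen's
inequality together with the translation invariance of `L^p(𝕋)`.

For part (ii), `D_h f - D_{2h} f = -½ D_h (δ_h f)`, whose `L^p` norm is at most `½ ‖δ_h f'‖_p`
by part (i) applied to `δ_h f`. Telescoping over `h = 2^{-n-1} β` and letting `n → ∞` (Fatou)
bounds `‖f' - D_β f‖_p` by `½ ∑ₙ ‖δ_{2^{-n-1} β} f'‖_p`. The measure `dβ/|β|` on `[-π, π]` can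
only shrink under the dilations `β ↦ 2^{-n} β`, so the `n`-th term contributes at most `2^{-ns}`
times the Besov seminorm, and summing the geometric series gives `C = (1 - 2^{-s})⁻¹`. The other
sign follows from `δ^+_β f' = δ_β f' + δ^-_β f'`.
-/

instance : Fact (0 < 2 * π) := ⟨by positivity⟩

instance : IsFiniteMeasure tmeas := by unfold tmeas; infer_instance

section ENNRealValued

variable {X : Type*} [MeasurableSpace X] {μ : Measure X}

lemma eLpNorm_rpow_toReal_eq_lintegral {ε : Type*} [ENorm ε] {p : ℝ≥0∞} (hp0 : p ≠ 0)
    (hp : p ≠ ∞) (g : X → ε) : eLpNorm g p μ ^ p.toReal = ∫⁻ x, ‖g x‖ₑ ^ p.toReal ∂μ := by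
  rw [eLpNorm_eq_eLpNorm' hp0 hp,
    lintegral_rpow_enorm_eq_rpow_eLpNorm' (ENNReal.toReal_pos hp0 hp)]

lemma eLpNorm_const_mul_le_of_ne_top {a : ℝ≥0∞} (ha : a ≠ ∞) (g : X → ℝ≥0∞) (p : ℝ≥0∞) :
    eLpNorm (fun x => a * g x) p μ ≤ a * eLpNorm g p μ := by
  lift a to ℝ≥0 using ha
  exact eLpNorm_le_nnreal_smul_eLpNorm_of_ae_le_mul' (.of_forall fun x => le_rfl) p

lemma eLpNorm_iSup_le_of_monotone {p : ℝ≥0∞} {F : ℕ → X → ℝ≥0∞}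
    (hF : ∀ N, AEMeasurable (F N) μ) (hmono : Monotone F) {C : ℝ≥0∞}
    (hC : ∀ N, eLpNorm (F N) p μ ≤ C) : eLpNorm (fun x => ⨆ N, F N x) p μ ≤ C := by
  rcases eq_or_ne p 0 with rfl | hp0
  · simp
  rcases eq_or_ne p ∞ with rfl | hptop
  · refine eLpNormEssSup_le_of_ae_enorm_bound ?_
    filter_upwards [ae_all_iff.2 fun N => ae_le_eLpNormEssSup (f := F N) (μ := μ)] with x hx
    exact iSup_le fun N => (hx N).trans (hC N)
  have hc : 0 < p.toReal := ENNReal.toReal_pos hp0 hptop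
  have hrpow_iSup : ∀ u : ℕ → ℝ≥0∞, (⨆ N, u N) ^ p.toReal = ⨆ N, u N ^ p.toReal :=
    fun u => Monotone.map_iSup_of_continuousAt ENNReal.continuous_rpow_const.continuousAt
      (ENNReal.monotone_rpow_of_nonneg hc.le) (ENNReal.zero_rpow_of_pos hc)
  rw [← ENNReal.rpow_le_rpow_iff hc, eLpNorm_rpow_toReal_eq_lintegral hp0 hptop]
  simp only [enorm_eq_self]
  rw [lintegral_congr fun x => hrpow_iSup (F · x),
    lintegral_iSup' (fun N => (hF N).pow_const _)
      (.of_forall fun x _ _ h => ENNReal.rpow_le_rpow (hmono h x) hc.le)]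
  refine iSup_le fun N => ?_
  simpa [eLpNorm_rpow_toReal_eq_lintegral hp0 hptop] using ENNReal.rpow_le_rpow (hC N) hc.le

lemma eLpNorm_tsum_le {p : ℝ≥0∞} (hp : 1 ≤ p) {g : ℕ → X → ℝ≥0∞}
    (hg : ∀ n, AEMeasurable (g n) μ) :
    eLpNorm (fun x => ∑' n, g n x) p μ ≤ ∑' n, eLpNorm (g n) p μ := by
  have hsum : (fun x => ∑' n, g n x) = fun x => ⨆ N, (∑ n ∈ Finset.range N, g n) x := by
    ext x; simp only [Finset.sum_apply, ENNReal.tsum_eq_iSup_nat]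
  rw [hsum]
  refine eLpNorm_iSup_le_of_monotone (fun N => Finset.aemeasurable_sum _ fun n _ => hg n)
    (fun N M h => Finset.sum_le_sum_of_subset (Finset.range_subset_range.2 h)) fun N => ?_
  exact (eLpNorm_sum_le (fun n _ => (hg n).aestronglyMeasurable) hp).trans (ENNReal.sum_le_tsum _)

end ENNRealValued

section Torus

variable {E : Type*} [NormedAddCommGroup E] {g : ℝ → E}

lemma measurePreserving_coe_tmeas :
    MeasurePreserving ((↑) : ℝ → AddCircle (2 * π)) tmeas volume := by
  have h := AddCircle.measurePreserving_mk (2 * π) (-π)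
  rwa [show -π + 2 * π = π by ring] at h

lemma continuous_periodic_lift {Y : Type*} [TopologicalSpace Y] {g : ℝ → Y} (hg : Continuous g)
    (hper : Periodic g (2 * π)) : Continuous hper.lift :=
  hg.quotient_liftOn' _

lemma lpT_eq_eLpNorm_lift (hg : Continuous g) (hper : Periodic g (2 * π)) (p : ℝ≥0∞) :
    lpT p g = eLpNorm hper.lift p volume := by
  have h : g = hper.lift ∘ (↑) := funext fun θ => (hper.lift_coe θ).symm
  conv_lhs => rw [h]
  exact eLpNorm_comp_measurePreserving (continuous_periodic_lift hg hper).aestronglyMeasurable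
    measurePreserving_coe_tmeas

lemma lpT_comp_add_right (hg : Continuous g) (hper : Periodic g (2 * π)) (p : ℝ≥0∞) (a : ℝ) :
    lpT p (fun θ => g (θ + a)) = lpT p g := by
  have hG := continuous_periodic_lift hg hper
  have h : (fun θ => g (θ + a)) = (hper.lift ∘ (· + (a : AddCircle (2 * π)))) ∘ (↑) := by
    ext θ; simp [← hper.lift_coe]
  rw [h, lpT, eLpNorm_comp_measurePreserving (hG.comp (continuous_add_const _)).aestronglyMeasurable
    measurePreserving_coe_tmeas, eLpNorm_comp_measurePreserving hG.aestronglyMeasurable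
    (measurePreserving_add_right volume _), lpT_eq_eLpNorm_lift hg hper]

lemma lpT_top_eq_iSup (hg : Continuous g) (hper : Periodic g (2 * π)) :
    lpT ∞ g = ⨆ x, ‖g x‖ₑ := by
  have hG := (continuous_periodic_lift hg hper).enorm
  rw [lpT_eq_eLpNorm_lift hg hper, eLpNorm_exponent_top, eLpNormEssSup_eq_essSup_enorm,
    ← iSup_eq_essSup fun y a ha => (isOpen_lt continuous_const hG).measure_ne_zero _ ⟨y, ha⟩]
  exact (QuotientAddGroup.mk_surjective.iSup_comp _).symm

lemma lpT_average_translate_le [NormedSpace ℝ E] (hg : Continuous g) (hper : Periodic g (2 * π))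
    (α : ℝ) {p : ℝ≥0∞} (hp : 1 ≤ p) :
    lpT p (fun θ => ∫ t in (0:ℝ)..1, g (θ + t * α)) ≤ lpT p g := by
  set ν := volume.restrict (Ioc (0:ℝ) 1)
  have : IsProbabilityMeasure ν := ⟨by simp [ν]⟩
  have hJensen : ∀ θ, ‖∫ t in (0:ℝ)..1, g (θ + t * α)‖ₑ ≤ eLpNorm (fun t => g (θ + t * α)) p ν :=
    fun θ => calc
      _ ≤ ∫⁻ t, ‖g (θ + t * α)‖ₑ ∂ν := by
        rw [intervalIntegral.integral_of_le zero_le_one]; exact enorm_integral_le_lintegral_enorm _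
      _ = eLpNorm (fun t => g (θ + t * α)) 1 ν := eLpNorm_one_eq_lintegral_enorm.symm
      _ ≤ _ := eLpNorm_le_eLpNorm_of_exponent_le hp (by fun_prop)
  rcases eq_or_ne p ∞ with rfl | hptop
  · rw [lpT_top_eq_iSup hg hper, lpT, eLpNorm_exponent_top]
    refine eLpNormEssSup_le_of_ae_enorm_bound (ae_of_all _ fun θ => (hJensen θ).trans ?_)
    exact eLpNormEssSup_le_of_ae_enorm_bound (ae_of_all _ fun t => le_iSup (‖g ·‖ₑ) _)
  have hp0 : p ≠ 0 := (zero_lt_one.trans_le hp).ne'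
  have hc : 0 < p.toReal := ENNReal.toReal_pos hp0 hptop
  rw [← ENNReal.rpow_le_rpow_iff hc, lpT, eLpNorm_rpow_toReal_eq_lintegral hp0 hptop]
  calc ∫⁻ θ, ‖∫ t in (0:ℝ)..1, g (θ + t * α)‖ₑ ^ p.toReal ∂tmeas
      ≤ ∫⁻ θ, ∫⁻ t, ‖g (θ + t * α)‖ₑ ^ p.toReal ∂ν ∂tmeas := by
        refine lintegral_mono fun θ => ?_
        rw [← eLpNorm_rpow_toReal_eq_lintegral hp0 hptop]
        exact ENNReal.rpow_le_rpow (hJensen θ) hc.le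
    _ = ∫⁻ t, ∫⁻ θ, ‖g (θ + t * α)‖ₑ ^ p.toReal ∂tmeas ∂ν :=
        lintegral_lintegral_swap (by fun_prop)
    _ = ∫⁻ t, lpT p g ^ p.toReal ∂ν := by
        refine lintegral_congr fun t => ?_
        rw [← lpT_comp_add_right hg hper p (t * α), lpT,
          eLpNorm_rpow_toReal_eq_lintegral hp0 hptop]
    _ = lpT p g ^ p.toReal := by simp

lemma measurable_lpT_of_continuous {F : ℝ → ℝ → E} (hF : Continuous (uncurry F))
    (hper : ∀ β, Periodic (F β) (2 * π)) (p : ℝ≥0∞) : Measurable fun β => lpT p (F β) := by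
  rcases eq_or_ne p 0 with rfl | hp0
  · simp [lpT]
  rcases eq_or_ne p ∞ with rfl | hptop
  · have hFβ : ∀ β, Continuous (F β) := fun β => hF.comp (.prodMk_right β)
    rw [funext fun β => lpT_top_eq_iSup (hFβ β) (hper β)]
    exact (lowerSemicontinuous_iSup fun θ =>
      (hF.comp (.prodMk_left θ)).enorm.lowerSemicontinuous).measurable
  simp_rw [lpT, eLpNorm_eq_lintegral_rpow_enorm_toReal hp0 hptop]
  exact (hF.enorm.measurable.pow_const _).lintegral_prod_right'.pow_const _

lemma periodic_dd {G : Type*} [AddGroup G] {g : ℝ → G} (hg : Periodic g (2 * π)) (h : ℝ) :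
    Periodic (dd h g) (2 * π) := fun θ => by
  simp only [dd, add_right_comm θ (2 * π) h, hg _]

lemma measurable_lpT_dd (hg : Continuous g) (hper : Periodic g (2 * π)) (p : ℝ≥0∞) :
    Measurable fun β => lpT p (dd β g) :=
  measurable_lpT_of_continuous (F := fun β => dd β g) (by unfold dd; fun_prop)
    (periodic_dd hper) p

end Torus

lemma _root_.Function.Periodic.deriv {E : Type*} [NormedAddCommGroup E] [NormedSpace ℝ E]
    {g : ℝ → E} {c : ℝ} (hg : Periodic g c) : Periodic (deriv g) c := fun x => by
  rw [← deriv_comp_add_const, funext hg]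

section DividedDifferences

variable {f : ℝ → E2}

lemma continuous_Dd (hf : Continuous f) (α : ℝ) : Continuous (Dd α f) := by
  unfold Dd; fun_prop

lemma contDiff_dd (hf : ContDiff ℝ 1 f) (h : ℝ) : ContDiff ℝ 1 (dd h f) := by
  unfold dd; fun_prop

lemma deriv_dd (hf : Differentiable ℝ f) (h : ℝ) : deriv (dd h f) = dd h (deriv f) := by
  ext1 θ
  exact ((hf (θ + h)).hasDerivAt.comp_add_const θ h |>.sub (hf θ).hasDerivAt).deriv

lemma Dd_eq_integral (hf : ContDiff ℝ 1 f) {α : ℝ} (hα : α ≠ 0) (θ : ℝ) :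
    Dd α f θ = ∫ t in (0:ℝ)..1, deriv f (θ + t * α) := by
  rw [intervalIntegral.integral_comp_mul_right (fun u => deriv f (θ + u)) hα,
    intervalIntegral.integral_comp_add_left (deriv f) θ,
    intervalIntegral.integral_deriv_eq_sub (fun x _ => hf.differentiable one_ne_zero x)
      ((hf.continuous_deriv le_rfl).intervalIntegrable _ _)]
  simp [Dd]

lemma lpT_Dd_le (hf : ContDiff ℝ 1 f) (hper : Periodic f (2 * π)) (α : ℝ) {p : ℝ≥0∞}
    (hp : 1 ≤ p) : lpT p (Dd α f) ≤ lpT p (deriv f) := by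
  rcases eq_or_ne α 0 with rfl | hα
  · have : Dd 0 f = 0 := by ext1 θ; simp [Dd]
    simp [this, lpT]
  rw [funext (Dd_eq_integral hf hα)]
  exact lpT_average_translate_le (hf.continuous_deriv le_rfl) hper.deriv α hp

lemma lpT_deriv_comp_add_sub_Dd_le (hf : ContDiff ℝ 1 f) (hper : Periodic f (2 * π))
    (a α : ℝ) {p : ℝ≥0∞} (hp : 1 ≤ p) :
    lpT p (fun θ => deriv f (θ + a) - Dd α f θ) ≤ 2 * lpT p (deriv f) := by
  have hf' : Continuous (deriv f) := hf.continuous_deriv le_rfl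
  calc _ ≤ lpT p (fun θ => deriv f (θ + a)) + lpT p (Dd α f) :=
        eLpNorm_sub_le (by fun_prop) (continuous_Dd hf.continuous α).aestronglyMeasurable hp
    _ ≤ 2 * lpT p (deriv f) := by
        rw [lpT_comp_add_right hf' hper.deriv, two_mul]
        gcongr
        exact lpT_Dd_le hf hper α hp

lemma lpT_deriv_comp_add_sub_Dd_le_add (hf : ContDiff ℝ 1 f) (β : ℝ) {p : ℝ≥0∞} (hp : 1 ≤ p) :
    lpT p (fun θ => deriv f (θ + β) - Dd β f θ)
      ≤ lpT p (dd β (deriv f)) + lpT p (fun θ => deriv f θ - Dd β f θ) := by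
  have hf' : Continuous (deriv f) := hf.continuous_deriv le_rfl
  rw [show (fun θ => deriv f (θ + β) - Dd β f θ)
      = dd β (deriv f) + fun θ => deriv f θ - Dd β f θ from
    funext fun θ => (sub_add_sub_cancel _ _ _).symm]
  exact eLpNorm_add_le (by unfold dd; fun_prop)
    (hf'.sub (continuous_Dd hf.continuous β)).aestronglyMeasurable hp

lemma Dd_sub_Dd_two_mul (h θ : ℝ) :
    Dd h f θ - Dd (2 * h) f θ = -((2:ℝ)⁻¹ • Dd h (dd h f) θ) := by
  simp only [Dd, dd, mul_inv, add_assoc, ← two_mul]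
  module

lemma lpT_Dd_sub_Dd_two_mul_le (hf : ContDiff ℝ 1 f) (hper : Periodic f (2 * π)) (h : ℝ)
    {p : ℝ≥0∞} (hp : 1 ≤ p) :
    lpT p (fun θ => Dd h f θ - Dd (2 * h) f θ) ≤ 2⁻¹ * lpT p (dd h (deriv f)) := by
  have hF : (fun θ => Dd h f θ - Dd (2 * h) f θ) = -((2:ℝ)⁻¹ • Dd h (dd h f)) :=
    funext (Dd_sub_Dd_two_mul h)
  have h2 : ‖(2:ℝ)⁻¹‖ₑ = 2⁻¹ := by simp [enorm_eq_nnnorm]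
  rw [hF, lpT, eLpNorm_neg, eLpNorm_const_smul, h2, ← lpT,
    ← deriv_dd (hf.differentiable one_ne_zero)]
  exact mul_le_mul_right (lpT_Dd_le (contDiff_dd hf h) (periodic_dd hper h) h hp) _

lemma tendsto_half_pow_mul_nhdsNE {β : ℝ} (hβ : β ≠ 0) :
    Tendsto (fun n : ℕ => (2⁻¹ : ℝ) ^ n * β) atTop (𝓝[≠] 0) :=
  tendsto_nhdsWithin_iff.2 ⟨by simpa using (tendsto_pow_atTop_nhds_zero_of_lt_one (by norm_num)
    (by norm_num : (2⁻¹ : ℝ) < 1)).mul_const β, .of_forall fun n => by simp [hβ]⟩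

lemma lpT_deriv_sub_Dd_le_tsum (hf : ContDiff ℝ 1 f) (hper : Periodic f (2 * π))
    {p : ℝ≥0∞} (hp : 1 ≤ p) {β : ℝ} (hβ : β ≠ 0) :
    lpT p (fun θ => deriv f θ - Dd β f θ)
      ≤ ∑' n : ℕ, 2⁻¹ * lpT p (dd ((2⁻¹ : ℝ) ^ (n + 1) * β) (deriv f)) := by
  have hcont : ∀ h, Continuous (Dd h f) := continuous_Dd hf.continuous
  have hlim : ∀ θ, Tendsto (fun N : ℕ => (Dd ((2⁻¹ : ℝ) ^ N * β) f - Dd β f) θ) atTop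
      (𝓝 (deriv f θ - Dd β f θ)) := fun θ =>
    ((hf.differentiable one_ne_zero θ).hasDerivAt.tendsto_slope_zero.comp
      (tendsto_half_pow_mul_nhdsNE hβ)).sub_const _
  have htelescope : ∀ N : ℕ, Dd ((2⁻¹ : ℝ) ^ N * β) f - Dd β f = ∑ n ∈ Finset.range N,
      (Dd ((2⁻¹ : ℝ) ^ (n + 1) * β) f - Dd (2 * ((2⁻¹ : ℝ) ^ (n + 1) * β)) f) := by
    intro N
    ext1 θ
    have h2 : ∀ n : ℕ, 2 * ((2⁻¹ : ℝ) ^ (n + 1) * β) = (2⁻¹ : ℝ) ^ n * β := fun n => by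
      rw [pow_succ]; ring
    simp only [Finset.sum_apply, Pi.sub_apply, h2,
      Finset.sum_range_sub (fun n => Dd ((2⁻¹ : ℝ) ^ n * β) f θ), pow_zero, one_mul]
  refine (Lp.eLpNorm_lim_le_liminf_eLpNorm
    (fun N => ((hcont _).sub (hcont _)).aestronglyMeasurable) _ (.of_forall hlim)).trans
    (liminf_le_of_frequently_le' (.of_forall fun N => ?_))
  rw [htelescope]
  refine (eLpNorm_sum_le (fun n _ => ((hcont _).sub (hcont _)).aestronglyMeasurable) hp).trans ?_
  exact (Finset.sum_le_sum fun n _ => lpT_Dd_sub_Dd_two_mul_le hf hper _ hp).trans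
    (ENNReal.sum_le_tsum _)

end DividedDifferences

section DilationMeasure

lemma eNorm_eq_eLpNorm {r : ℝ≥0∞} (hr : r ≠ 0) (g : ℝ → ℝ≥0∞) :
    eNorm r g = eLpNorm g r bmeas := by
  unfold eNorm
  split_ifs with htop
  · simp [htop, eLpNorm_exponent_top, eLpNormEssSup]
  · simp [eLpNorm_eq_lintegral_rpow_enorm_toReal hr htop]

lemma ae_ne_zero_bmeas : ∀ᵐ β ∂bmeas, β ≠ 0 := by
  have hvol : ∀ᵐ β ∂(volume : Measure ℝ), β ≠ 0 := by simp [ae_iff]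
  exact withDensity_absolutelyContinuous _ _ (ae_restrict_of_ae hvol)

lemma bmeas_apply {S : Set ℝ} (hS : MeasurableSet S) :
    bmeas S = ∫⁻ β, (S ∩ Ioc (-π) π).indicator (fun β => ENNReal.ofReal |β|⁻¹) β := by
  rw [bmeas, withDensity_apply _ hS, tmeas, Measure.restrict_restrict hS,
    lintegral_indicator (hS.inter measurableSet_Ioc)]

lemma map_const_mul_bmeas_le {c : ℝ} (hc0 : 0 < c) (hc1 : c ≤ 1) :
    bmeas.map (c * ·) ≤ bmeas := by
  refine Measure.le_iff.2 fun A hA => ?_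
  have hmul : Measurable (c * · : ℝ → ℝ) := measurable_const_mul c
  set ρ : ℝ → ℝ≥0∞ := fun β => ENNReal.ofReal |β|⁻¹
  have hρ : ∀ β, ρ β = ENNReal.ofReal c * ρ (c * β) := fun β => by
    rw [← ENNReal.ofReal_mul hc0.le, abs_mul, abs_of_pos hc0, mul_inv, ← mul_assoc,
      mul_inv_cancel₀ hc0.ne', one_mul]
  have hpt : ∀ β, ((c * ·) ⁻¹' A ∩ Ioc (-π) π).indicator ρ β
      ≤ ENNReal.ofReal c * (A ∩ Ioc (-π) π).indicator ρ (c * β) := fun β => by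
    by_cases hβ : β ∈ (c * ·) ⁻¹' A ∩ Ioc (-π) π
    · have hcβ : c * β ∈ A ∩ Ioc (-π) π := by
        obtain ⟨hA, h1, h2⟩ := hβ
        refine ⟨hA, ?_, ?_⟩ <;> nlinarith [Real.pi_pos]
      rw [indicator_of_mem hβ, indicator_of_mem hcβ, hρ]
    · simp [indicator_of_notMem hβ]
  have hind : Measurable ((A ∩ Ioc (-π) π).indicator ρ) :=
    (measurable_abs.inv.ennreal_ofReal).indicator (hA.inter measurableSet_Ioc)
  calc bmeas.map (c * ·) A = ∫⁻ β, ((c * ·) ⁻¹' A ∩ Ioc (-π) π).indicator ρ β := by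
        rw [Measure.map_apply hmul hA, bmeas_apply (hmul hA)]
    _ ≤ ∫⁻ β, ENNReal.ofReal c * (A ∩ Ioc (-π) π).indicator ρ (c * β) := lintegral_mono hpt
    _ = ENNReal.ofReal c * ∫⁻ γ, (A ∩ Ioc (-π) π).indicator ρ γ ∂(volume.map (c * ·)) := by
        rw [lintegral_const_mul' _ _ ENNReal.ofReal_ne_top, lintegral_map hind hmul]
    _ = bmeas A := by
        rw [Real.map_volume_mul_left hc0.ne', lintegral_smul_measure, smul_eq_mul, ← mul_assoc,
          ← ENNReal.ofReal_mul hc0.le, abs_of_pos (inv_pos.2 hc0), mul_inv_cancel₀ hc0.ne',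
          ENNReal.ofReal_one, one_mul, bmeas_apply hA]

lemma eLpNorm_comp_const_mul_le {H : ℝ → ℝ≥0∞} (hH : Measurable H) {c : ℝ} (hc0 : 0 < c)
    (hc1 : c ≤ 1) (r : ℝ≥0∞) :
    eLpNorm (fun β => H (c * β)) r bmeas ≤ eLpNorm H r bmeas := by
  rw [← Function.comp_def, ← eLpNorm_map_measure hH.aestronglyMeasurable
    (measurable_const_mul c).aemeasurable]
  exact eLpNorm_mono_measure _ (map_const_mul_bmeas_le hc0 hc1)

lemma div_ofReal_abs_rpow_eq {c : ℝ} (hc : 0 < c) (x : ℝ≥0∞) (β s : ℝ) :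
    x / ENNReal.ofReal (|β| ^ s) = ENNReal.ofReal (c ^ s) * (x / ENNReal.ofReal (|c * β| ^ s)) := by
  rw [abs_mul, abs_of_pos hc, Real.mul_rpow hc.le (abs_nonneg β),
    ENNReal.ofReal_mul (by positivity), ← mul_div_assoc,
    ENNReal.mul_div_mul_left _ _ (ENNReal.ofReal_pos.2 (by positivity)).ne' ENNReal.ofReal_ne_top]

lemma eLpNorm_tsum_dilate_le {ω : ℝ → ℝ≥0∞} (hω : Measurable ω) {c : ℝ} (hc0 : 0 < c)
    (hc1 : c ≤ 1) (s : ℝ) {r : ℝ≥0∞} (hr : 1 ≤ r) :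
    eLpNorm (fun β => (∑' n : ℕ, ω (c ^ n * β)) / ENNReal.ofReal (|β| ^ s)) r bmeas
      ≤ (1 - ENNReal.ofReal (c ^ s))⁻¹ *
        eLpNorm (fun β => ω β / ENNReal.ofReal (|β| ^ s)) r bmeas := by
  set H : ℝ → ℝ≥0∞ := fun β => ω β / ENNReal.ofReal (|β| ^ s)
  have hH : Measurable H := hω.div (measurable_abs.pow_const s).ennreal_ofReal
  have hpt : ∀ β, (∑' n : ℕ, ω (c ^ n * β)) / ENNReal.ofReal (|β| ^ s)
      = ∑' n : ℕ, ENNReal.ofReal (c ^ s) ^ n * H (c ^ n * β) := fun β => by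
    rw [div_eq_mul_inv, ← ENNReal.tsum_mul_right]
    refine tsum_congr fun n => ?_
    rw [← div_eq_mul_inv, div_ofReal_abs_rpow_eq (pow_pos hc0 n), ← Real.rpow_pow_comm hc0.le,
      ENNReal.ofReal_pow (by positivity)]
  simp_rw [hpt]
  calc _ ≤ ∑' n : ℕ, eLpNorm (fun β => ENNReal.ofReal (c ^ s) ^ n * H (c ^ n * β)) r bmeas :=
        eLpNorm_tsum_le hr fun n => ((hH.comp (measurable_const_mul _)).const_mul _).aemeasurable
    _ ≤ ∑' n : ℕ, ENNReal.ofReal (c ^ s) ^ n * eLpNorm H r bmeas := by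
        refine ENNReal.tsum_le_tsum fun n => ?_
        exact (eLpNorm_const_mul_le_of_ne_top (ENNReal.pow_ne_top ENNReal.ofReal_ne_top) _ _).trans
          (mul_le_mul_right (eLpNorm_comp_const_mul_le hH (pow_pos hc0 n)
            (pow_le_one₀ hc0.le hc1) r) _)
    _ = _ := by rw [ENNReal.tsum_mul_right, ENNReal.tsum_geometric]

end DilationMeasure

lemma add_tsum_half_le_tsum (ω : ℝ → ℝ≥0∞) (β : ℝ) :
    ω β + ∑' n : ℕ, 2⁻¹ * ω ((2⁻¹ : ℝ) ^ (n + 1) * β) ≤ ∑' n : ℕ, ω ((2⁻¹ : ℝ) ^ n * β) := by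
  rw [tsum_eq_zero_add' (f := fun n : ℕ => ω ((2⁻¹ : ℝ) ^ n * β)) ENNReal.summable, pow_zero,
    one_mul]
  gcongr with n
  exact mul_le_of_le_one_left' (by norm_num)

lemma eNorm_div_rpow_le_besov {E : Type*} [NormedAddCommGroup E] {s : ℝ} (hs : 0 < s)
    {p q : ℝ≥0∞} (hq : 1 ≤ q) {g : ℝ → E} (hg : Continuous g) (hper : Periodic g (2 * π))
    {Φ : ℝ → ℝ≥0∞} (hΦ : ∀ β ≠ 0, Φ β ≤ ∑' n : ℕ, lpT p (dd ((2⁻¹ : ℝ) ^ n * β) g)) :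
    eNorm q (fun β => Φ β / ENNReal.ofReal (|β| ^ s))
      ≤ ENNReal.ofReal (1 - (2⁻¹ : ℝ) ^ s)⁻¹ * besov s p q g := by
  have hq0 : q ≠ 0 := (zero_lt_one.trans_le hq).ne'
  have hconst : ENNReal.ofReal (1 - (2⁻¹ : ℝ) ^ s)⁻¹ = (1 - ENNReal.ofReal ((2⁻¹ : ℝ) ^ s))⁻¹ := by
    rw [ENNReal.ofReal_inv_of_pos (sub_pos.2 (Real.rpow_lt_one (by norm_num) (by norm_num) hs)),
      ENNReal.ofReal_sub _ (by positivity), ENNReal.ofReal_one]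
  have hbesov : besov s p q g
      = eLpNorm (fun β => lpT p (dd β g) / ENNReal.ofReal (|β| ^ s)) q bmeas := by
    simp only [besov, besovW, ENNReal.ofReal_one, one_mul, eNorm_eq_eLpNorm hq0]
  rw [hbesov, hconst, eNorm_eq_eLpNorm hq0]
  refine (eLpNorm_mono_enorm_ae ?_).trans (eLpNorm_tsum_dilate_le (measurable_lpT_dd hg hper p)
    (by norm_num) (by norm_num) s hq)
  filter_upwards [ae_ne_zero_bmeas] with β hβ
  exact ENNReal.div_le_div_right (hΦ β hβ) _

/-- Lemma 3.2 (bounds for the averaged difference operators `δ_α^±`). -/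
theorem averaged_difference_bounds :
    (∀ f : ℝ → E2, Periodic f (2 * π) → ContDiff ℝ 1 f →
      ∀ p : ℝ≥0∞, 1 ≤ p → ∀ α : ℝ, α ≠ 0 →
        lpT p (fun θ => deriv f θ - Dd α f θ) ≤ 2 * lpT p (deriv f) ∧
        lpT p (fun θ => deriv f (θ + α) - Dd α f θ) ≤ 4 * lpT p (deriv f) ∧
        lpT p (Dd α f) ≤ lpT p (deriv f)) ∧
    ∀ s : ℝ, 0 < s → s < 1 → ∀ q : ℝ≥0∞, 1 ≤ q →
      ∃ C : ℝ, 0 < C ∧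
        ∀ p : ℝ≥0∞, 1 ≤ p → ∀ f : ℝ → E2, Periodic f (2 * π) → ContDiff ℝ 1 f →
          eNorm q (fun β =>
              lpT p (fun θ => deriv f (θ + β) - Dd β f θ) / ENNReal.ofReal (|β| ^ s)) ≤
            ENNReal.ofReal C * besov s p q (deriv f) ∧
          eNorm q (fun β =>
              lpT p (fun θ => deriv f θ - Dd β f θ) / ENNReal.ofReal (|β| ^ s)) ≤
            ENNReal.ofReal C * besov s p q (deriv f) := by
  refine ⟨fun f hper hf p hp α _ => ⟨?_, ?_, lpT_Dd_le hf hper α hp⟩, fun s hs _ q hq => ?_⟩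
  · simpa using lpT_deriv_comp_add_sub_Dd_le hf hper 0 α hp
  · exact (lpT_deriv_comp_add_sub_Dd_le hf hper α α hp).trans (by gcongr; norm_num)
  refine ⟨(1 - (2⁻¹ : ℝ) ^ s)⁻¹, inv_pos.2 (sub_pos.2 (Real.rpow_lt_one (by norm_num)
    (by norm_num) hs)), fun p hp f hper hf => ?_⟩
  have hf' : Continuous (deriv f) := hf.continuous_deriv le_rfl
  set ω : ℝ → ℝ≥0∞ := fun γ => lpT p (dd γ (deriv f))
  have hminus : ∀ β ≠ 0, lpT p (fun θ => deriv f θ - Dd β f θ)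
      ≤ ∑' n : ℕ, 2⁻¹ * ω ((2⁻¹ : ℝ) ^ (n + 1) * β) :=
    fun β hβ => lpT_deriv_sub_Dd_le_tsum hf hper hp hβ
  exact ⟨eNorm_div_rpow_le_besov hs hq hf' hper.deriv fun β hβ =>
      ((lpT_deriv_comp_add_sub_Dd_le_add hf β hp).trans (add_le_add le_rfl (hminus β hβ))).trans
        (add_tsum_half_le_tsum ω β),
    eNorm_div_rpow_le_besov hs hq hf' hper.deriv fun β hβ =>
      ((hminus β hβ).trans le_add_self).trans (add_tsum_half_le_tsum ω β)⟩

end Peskin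
end
end
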